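/- Let C_I > 0, q̲ ∈ (0,1) and d₁, d₂ ∈ ℝ satisfy the smooth-fit system d₁·v₁(q̲) + d₂·v₂(q̲) − C_I/ρ = μ and d₁·v₁'(q̲) + d₂·v₂'(q̲) = 0. Then necessarily d₁ = ( (1+k)/2 − q̲ )·( μ + C_I/ρ ) / ( k·(1−q̲)^{(1+k)/2}·q̲^{(1−k)/2} ) and d₂ = −( (1−k)/2 − q̲ )·( μ + C_I/ρ ) / ( k·(1−q̲)^{(1−k)/2}·q̲^{(1+k)/2} ). -/

import Mathlib

set_option autoImplicit false

/-!
Both basis solutions have the form `v(q) = q ^ a * (1 - q) ^ b` with `a + b = 1`, so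
`v'(q) = v(q) * (a - q) / (q * (1 - q))`. Writing `X = d₁ v₁(q̲)` and `Y = d₂ v₂(q̲)`, the
smooth-fit system becomes the linear system `X + Y = μ + C_I/ρ`,
`(a - q̲) X + (b - q̲) Y = 0`, whose determinant is `b - a = k > 0`.
-/

lemma hasDerivAt_rpow_mul_one_sub_rpow {a b x : ℝ} (hab : a + b = 1) (hx₀ : 0 < x) (hx₁ : x < 1) :
    HasDerivAt (fun q : ℝ => q ^ a * (1 - q) ^ b)
      (x ^ a * (1 - x) ^ b * ((a - x) / (x * (1 - x)))) x := by
  have h1x : 0 < 1 - x := by linarith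
  have hleft : HasDerivAt (fun q : ℝ => q ^ a) (a * x ^ (a - 1)) x :=
    Real.hasDerivAt_rpow_const (Or.inl hx₀.ne')
  have hright : HasDerivAt (fun q : ℝ => (1 - q) ^ b) (b * (1 - x) ^ (b - 1) * -1) x :=
    (Real.hasDerivAt_rpow_const (Or.inl h1x.ne')).comp x ((hasDerivAt_id x).const_sub 1)
  refine (hleft.mul hright).congr_deriv ?_
  rw [Real.rpow_sub_one hx₀.ne', Real.rpow_sub_one h1x.ne']
  field_simp
  linear_combination -x * hab

lemma solution_of_sum_eq_of_weighted_sum_eq_zero {X Y M a b q : ℝ} (hab : a ≠ b) (hsum : X + Y = M)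
    (hweighted : X * (a - q) + Y * (b - q) = 0) :
    X = (b - q) * M / (b - a) ∧ Y = (q - a) * M / (b - a) := by
  have hba : b - a ≠ 0 := sub_ne_zero.2 hab.symm
  constructor
  · rw [eq_div_iff hba, ← hsum]; linear_combination -hweighted
  · rw [eq_div_iff hba, ← hsum]; linear_combination hweighted

theorem stmt_8_general (l μ h ρ σ CI d₁ d₂ : ℝ)
    (hρ : 0 < ρ)
    (k : ℝ) (hk : k = Real.sqrt (1 + 8 * ρ * (σ / (h - l)) ^ 2))
    (v₁ v₂ : ℝ → ℝ)
    (hv₁ : ∀ q : ℝ, v₁ q = q ^ ((1 - k) / 2) * (1 - q) ^ ((1 + k) / 2))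
    (hv₂ : ∀ q : ℝ, v₂ q = q ^ ((1 + k) / 2) * (1 - q) ^ ((1 - k) / 2))
    (ql : ℝ) (hql : ql ∈ Set.Ioo (0 : ℝ) 1)
    (hfit1 : d₁ * v₁ ql + d₂ * v₂ ql - CI / ρ = μ)
    (hfit2 : d₁ * deriv v₁ ql + d₂ * deriv v₂ ql = 0) :
    d₁ = ((1 + k) / 2 - ql) * (μ + CI / ρ)
        / (k * (1 - ql) ^ ((1 + k) / 2) * ql ^ ((1 - k) / 2))
    ∧ d₂ = -(((1 - k) / 2 - ql) * (μ + CI / ρ)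
        / (k * (1 - ql) ^ ((1 - k) / 2) * ql ^ ((1 + k) / 2))) := by
  obtain ⟨hq₀, hq₁⟩ := hql
  have hk₀ : 0 < k := hk ▸ Real.sqrt_pos.2 (by positivity)
  have hderiv₁ : deriv v₁ ql = v₁ ql * (((1 - k) / 2 - ql) / (ql * (1 - ql))) := by
    rw [funext hv₁]
    exact (hasDerivAt_rpow_mul_one_sub_rpow (by ring) hq₀ hq₁).deriv
  have hderiv₂ : deriv v₂ ql = v₂ ql * (((1 + k) / 2 - ql) / (ql * (1 - ql))) := by
    rw [funext hv₂]
    exact (hasDerivAt_rpow_mul_one_sub_rpow (by ring) hq₀ hq₁).deriv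
  have hweighted : d₁ * v₁ ql * ((1 - k) / 2 - ql) + d₂ * v₂ ql * ((1 + k) / 2 - ql) = 0 := by
    rw [hderiv₁, hderiv₂] at hfit2
    have hq : ql * (1 - ql) ≠ 0 := mul_ne_zero hq₀.ne' (by linarith)
    field_simp at hfit2
    linear_combination hfit2 / 2
  obtain ⟨hX, hY⟩ := solution_of_sum_eq_of_weighted_sum_eq_zero (M := μ + CI / ρ)
    (by linarith) (by linear_combination hfit1) hweighted
  have hdet : (1 + k) / 2 - (1 - k) / 2 = k := by ring
  rw [hdet, hv₁, eq_div_iff hk₀.ne'] at hX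
  rw [hdet, hv₂, eq_div_iff hk₀.ne'] at hY
  have h1q : 0 < 1 - ql := by linarith
  constructor
  · rw [eq_div_iff (by positivity)]
    linear_combination hX
  · rw [← neg_div, eq_div_iff (by positivity)]
    linear_combination hY

/-- If `(d₁, d₂)` solves the smooth-fit system
`d₁ v₁(q̲) + d₂ v₂(q̲) − C_I/ρ = μ` and `d₁ v₁'(q̲) + d₂ v₂'(q̲) = 0` at `q̲ ∈ (0,1)`,
then `d₁` and `d₂` are given by the stated closed forms. -/
theorem stmt_8 (l μ h ρ σ CI d₁ d₂ : ℝ)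
    (hl : 0 < l) (hlμ : l < μ) (hμh : μ < h) (hρ : 0 < ρ) (hσ : 0 < σ)
    (hCI : 0 < CI)
    (k : ℝ) (hk : k = Real.sqrt (1 + 8 * ρ * (σ / (h - l)) ^ 2))
    (v₁ v₂ : ℝ → ℝ)
    (hv₁ : ∀ q : ℝ, v₁ q = q ^ ((1 - k) / 2) * (1 - q) ^ ((1 + k) / 2))
    (hv₂ : ∀ q : ℝ, v₂ q = q ^ ((1 + k) / 2) * (1 - q) ^ ((1 - k) / 2))
    (ql : ℝ) (hql : ql ∈ Set.Ioo (0 : ℝ) 1)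
    (hfit1 : d₁ * v₁ ql + d₂ * v₂ ql - CI / ρ = μ)
    (hfit2 : d₁ * deriv v₁ ql + d₂ * deriv v₂ ql = 0) :
    d₁ = ((1 + k) / 2 - ql) * (μ + CI / ρ)
        / (k * (1 - ql) ^ ((1 + k) / 2) * ql ^ ((1 - k) / 2))
    ∧ d₂ = -(((1 - k) / 2 - ql) * (μ + CI / ρ)
        / (k * (1 - ql) ^ ((1 - k) / 2) * ql ^ ((1 + k) / 2))) :=
  stmt_8_general l μ h ρ σ CI d₁ d₂ hρ k hk v₁ v₂ hv₁ hv₂ ql hql hfit1 hfit2
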